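/- Let H be a unital Hopf *-algebra with invariant integral φ (φ: H → ℂ nonzero, faithful, positive, with (id ⊗ φ)(Δ(h)) = φ(h)1 and φ ∘ S = φ) admitting a modular automorphism σ (φ(hg) = φ(g σ(h))). Let μ: N → ℂ be a linear functional on a unital braided commutative Yetter–Drinfeld H-algebra N with μ(m ◁ h) = ε(h)μ(m) and μ(mn) = μ(n γ(m)). Define Φ on the smash product A = H # N by Φ(h # m) := φ(h)μ(m). Then Φ satisfies the KMS property Φ(ab) = Φ(b σ_A(a)) for all a, b ∈ A, where σ_A(h # m) := σ(h) # γ(m). -/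
import Mathlib


open scoped TensorProduct

noncomputable section

/-- A unital Hopf algebra over `ℂ`, presented together with chosen finite
Sweedler representatives for the comultiplication and a bijective antipode. -/
structure HopfData (H : Type*) [Ring H] [Algebra ℂ H] where
  comul : H →ₗ[ℂ] H ⊗[ℂ] H
  Δ : H → List (H × H)
  Δ_spec : ∀ h, ((Δ h).map fun p => p.1 ⊗ₜ[ℂ] p.2).sum = comul h
  ε : H →ₗ[ℂ] ℂ
  S : H →ₗ[ℂ] H
  Sinv : H →ₗ[ℂ] H
  S_Sinv : ∀ h, S (Sinv h) = h
  Sinv_S : ∀ h, Sinv (S h) = h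
  comul_one : comul 1 = (1 : H) ⊗ₜ[ℂ] (1 : H)
  comul_mul : ∀ h g, comul (h * g) = comul h * comul g
  eps_one : ε 1 = 1
  eps_mul : ∀ h g, ε (h * g) = ε h * ε g
  counit_left : ∀ h, ((Δ h).map fun p => ε p.1 • p.2).sum = h
  counit_right : ∀ h, ((Δ h).map fun p => ε p.2 • p.1).sum = h
  antipode_left : ∀ h, ((Δ h).map fun p => S p.1 * p.2).sum = algebraMap ℂ H (ε h)
  antipode_right : ∀ h, ((Δ h).map fun p => p.1 * S p.2).sum = algebraMap ℂ H (ε h)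
  coassoc : ∀ h,
    (TensorProduct.assoc ℂ H H H)
        ((TensorProduct.map comul LinearMap.id) (comul h))
      = (TensorProduct.map LinearMap.id comul) (comul h)
  S_one : S 1 = 1
  S_antimul : ∀ h g, S (h * g) = S g * S h

/-- The chosen iterated Sweedler components `h₍₁₎ ⊗ h₍₂₎ ⊗ h₍₃₎`
(coming from `(Δ ⊗ id) ∘ Δ`). -/
def HopfData.Δ3 {H : Type*} [Ring H] [Algebra ℂ H] (D : HopfData H) (h : H) :
    List (H × H × H) :=
  (D.Δ h).flatMap fun p => (D.Δ p.1).map fun q => (q.1, q.2, p.2)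

/-- A unital braided commutative Yetter–Drinfeld algebra over the Hopf algebra
presented by `D`: a right module-algebra action `act` (written `m ◁ h`) together
with a left coaction `coact` (with chosen Sweedler representatives
`θ m = m₍₋₁₎ ⊗ m₍₀₎`) satisfying the Yetter–Drinfeld compatibility
`θ(m ◁ h) = S⁻¹(h₍₃₎) m₍₋₁₎ h₍₁₎ ⊗ (m₍₀₎ ◁ h₍₂₎)` and braided commutativity
`m n = (n ◁ m₍₋₁₎) m₍₀₎`. -/
structure YDData (H N : Type*) [Ring H] [Algebra ℂ H] [Ring N] [Algebra ℂ N]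
    (D : HopfData H) where
  act : N →ₗ[ℂ] H →ₗ[ℂ] N
  act_one : ∀ m, act m 1 = m
  act_mulH : ∀ m h g, act m (h * g) = act (act m h) g
  act_alg : ∀ m n h, act (m * n) h = ((D.Δ h).map fun p => act m p.1 * act n p.2).sum
  act_unit : ∀ h, act 1 h = D.ε h • (1 : N)
  coact : N →ₗ[ℂ] H ⊗[ℂ] N
  θ : N → List (H × N)
  θ_spec : ∀ m, ((θ m).map fun p => p.1 ⊗ₜ[ℂ] p.2).sum = coact m
  coact_counit : ∀ m, ((θ m).map fun p => D.ε p.1 • p.2).sum = m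
  coact_coassoc : ∀ m,
    (TensorProduct.assoc ℂ H H N)
        ((TensorProduct.map D.comul LinearMap.id) (coact m))
      = (TensorProduct.map LinearMap.id coact) (coact m)
  coact_one : coact 1 = (1 : H) ⊗ₜ[ℂ] (1 : N)
  coact_mul : ∀ m n, coact (m * n)
      = (((θ m).flatMap fun p => (θ n).map fun q =>
            (q.1 * p.1) ⊗ₜ[ℂ] (p.2 * q.2))).sum
  yd : ∀ m h, coact (act m h)
      = (((D.Δ3 h).flatMap fun t => (θ m).map fun p =>
            (D.Sinv t.2.2 * p.1 * t.1) ⊗ₜ[ℂ] act p.2 t.2.1)).sum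
  bc : ∀ m n, m * n = ((θ m).map fun p => act n p.1 * p.2).sum

/-- The canonical map `γ(m) = m₍₀₎ ◁ S⁻¹(m₍₋₁₎)`. -/
def YDData.gamma {H N : Type*} [Ring H] [Algebra ℂ H] [Ring N] [Algebra ℂ N]
    {D : HopfData H} (Y : YDData H N D) (m : N) : N :=
  ((Y.θ m).map fun p => Y.act p.2 (D.Sinv p.1)).sum

/-- The canonical map `γ̂(m) = m₍₀₎ ◁ S²(m₍₋₁₎)`. -/
def YDData.gammaHat {H N : Type*} [Ring H] [Algebra ℂ H] [Ring N] [Algebra ℂ N]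
    {D : HopfData H} (Y : YDData H N D) (m : N) : N :=
  ((Y.θ m).map fun p => Y.act p.2 (D.S (D.S p.1))).sum

open scoped ComplexOrder


section Stmt18Aux

variable {H : Type*} [Ring H] [Algebra ℂ H]

private lemma lsumF {α M M₂ : Type*} [AddCommMonoid M] [Module ℂ M]
    [AddCommMonoid M₂] [Module ℂ M₂] (f : M →ₗ[ℂ] M₂) (l : List α) (g : α → M) :
    f (l.map g).sum = (l.map fun x => f (g x)).sum := by
  rw [map_list_sum, List.map_map]; rfl

private lemma sum_map_congr {α M : Type*} [AddCommMonoid M] {l : List α} {f g : α → M}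
    (h : ∀ a ∈ l, f a = g a) : (l.map f).sum = (l.map g).sum := by
  rw [List.map_congr_left h]

private lemma sum_map_add {α M : Type*} [AddCommMonoid M] (l : List α) (f g : α → M) :
    (l.map fun x => f x + g x).sum = (l.map f).sum + (l.map g).sum := by
  induction l with
  | nil => simp
  | cons a t ih => simp only [List.map_cons, List.sum_cons, ih]; abel

private lemma sum_comm' {α β M : Type*} [AddCommMonoid M] (l1 : List α) (l2 : List β)
    (f : α → β → M) :
    (l1.map fun a => (l2.map fun b => f a b).sum).sum
      = (l2.map fun b => (l1.map fun a => f a b).sum).sum := by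
  induction l1 with
  | nil => simp
  | cons a t ih => simp only [List.map_cons, List.sum_cons, ih, sum_map_add]

private lemma sum_map_smul {α M : Type*} [AddCommMonoid M] [Module ℂ M]
    (l : List α) (c : α → ℂ) (v : M) :
    (l.map fun x => c x • v).sum = ((l.map c).sum) • v := by
  induction l with
  | nil => simp
  | cons a t ih => simp [ih, add_smul]

private lemma push2 {X : Type*} [AddCommMonoid X] [Module ℂ X] (D : HopfData H)
    (f : (H ⊗[ℂ] H) →ₗ[ℂ] X) (x : H) :
    f (D.comul x) = ((D.Δ x).map fun p => f (p.1 ⊗ₜ[ℂ] p.2)).sum := by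
  rw [← D.Δ_spec x, lsumF]

private lemma TR {X : Type*} [AddCommMonoid X] [Module ℂ X] (D : HopfData H)
    (G : (H ⊗[ℂ] H) ⊗[ℂ] H →ₗ[ℂ] X) (h : H) :
    ((D.Δ h).map fun p =>
        ((D.Δ p.1).map fun q => G ((q.1 ⊗ₜ[ℂ] q.2) ⊗ₜ[ℂ] p.2)).sum).sum
      = ((D.Δ h).map fun p =>
        ((D.Δ p.2).map fun q => G ((p.1 ⊗ₜ[ℂ] q.1) ⊗ₜ[ℂ] q.2)).sum).sum := by
  have h1 : ((D.Δ h).map fun p =>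
        ((D.Δ p.1).map fun q => G ((q.1 ⊗ₜ[ℂ] q.2) ⊗ₜ[ℂ] p.2)).sum).sum
      = (G ∘ₗ (TensorProduct.map D.comul LinearMap.id)) (D.comul h) := by
    rw [push2 D (G ∘ₗ TensorProduct.map D.comul LinearMap.id) h]
    refine sum_map_congr fun p _ => ?_
    have e1 : (G ∘ₗ TensorProduct.map D.comul LinearMap.id) (p.1 ⊗ₜ[ℂ] p.2)
        = (G ∘ₗ (TensorProduct.mk ℂ (H ⊗[ℂ] H) H).flip p.2) (D.comul p.1) := by
      simp
    rw [e1, push2 D _ p.1]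
    simp
  have h2 : ((D.Δ h).map fun p =>
        ((D.Δ p.2).map fun q => G ((p.1 ⊗ₜ[ℂ] q.1) ⊗ₜ[ℂ] q.2)).sum).sum
      = (G ∘ₗ ((TensorProduct.assoc ℂ H H H).symm : H ⊗[ℂ] (H ⊗[ℂ] H) →ₗ[ℂ] (H ⊗[ℂ] H) ⊗[ℂ] H)
          ∘ₗ (TensorProduct.map LinearMap.id D.comul)) (D.comul h) := by
    rw [push2 D _ h]
    refine sum_map_congr fun p _ => ?_
    have e1 : (G ∘ₗ ((TensorProduct.assoc ℂ H H H).symm :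
            H ⊗[ℂ] (H ⊗[ℂ] H) →ₗ[ℂ] (H ⊗[ℂ] H) ⊗[ℂ] H)
          ∘ₗ (TensorProduct.map LinearMap.id D.comul)) (p.1 ⊗ₜ[ℂ] p.2)
        = ((G ∘ₗ ((TensorProduct.assoc ℂ H H H).symm :
            H ⊗[ℂ] (H ⊗[ℂ] H) →ₗ[ℂ] (H ⊗[ℂ] H) ⊗[ℂ] H))
            ∘ₗ TensorProduct.mk ℂ H (H ⊗[ℂ] H) p.1) (D.comul p.2) := by
      simp
    rw [e1, push2 D _ p.2]
    simp [TensorProduct.assoc_symm_tmul]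
  rw [h1, h2]
  simp only [LinearMap.comp_apply]
  congr 1
  rw [← D.coassoc h, LinearEquiv.coe_coe, LinearEquiv.symm_apply_apply]


private def convM (D : HopfData H) (f g : H →ₗ[ℂ] H ⊗[ℂ] H) : H →ₗ[ℂ] H ⊗[ℂ] H :=
  LinearMap.mul' ℂ (H ⊗[ℂ] H) ∘ₗ TensorProduct.map f g ∘ₗ D.comul

private lemma convM_apply (D : HopfData H) (f g : H →ₗ[ℂ] H ⊗[ℂ] H) (h : H) :
    convM D f g h = ((D.Δ h).map fun p => f p.1 * g p.2).sum := by
  show (LinearMap.mul' ℂ (H ⊗[ℂ] H) ∘ₗ TensorProduct.map f g) (D.comul h) = _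
  rw [push2 D _ h]
  simp [LinearMap.mul'_apply]

/-- the convolution unit `h ↦ ε h • 1`. -/
private def eps1 (D : HopfData H) : H →ₗ[ℂ] H ⊗[ℂ] H :=
  LinearMap.toSpanSingleton ℂ (H ⊗[ℂ] H) 1 ∘ₗ D.ε

private lemma eps1_apply (D : HopfData H) (h : H) : eps1 D h = D.ε h • 1 := rfl

private lemma convM_unit_left (D : HopfData H) (f : H →ₗ[ℂ] H ⊗[ℂ] H) (h : H) :
    convM D (eps1 D) f h = f h := by
  rw [convM_apply]
  have : ∀ p : H × H, eps1 D p.1 * f p.2 = f (D.ε p.1 • p.2) := fun p => by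
    rw [eps1_apply, smul_mul_assoc, one_mul, map_smul]
  rw [sum_map_congr fun p _ => this p, ← lsumF f, D.counit_left]

private lemma convM_unit_right (D : HopfData H) (f : H →ₗ[ℂ] H ⊗[ℂ] H) (h : H) :
    convM D f (eps1 D) h = f h := by
  rw [convM_apply]
  have : ∀ p : H × H, f p.1 * eps1 D p.2 = f (D.ε p.2 • p.1) := fun p => by
    rw [eps1_apply, mul_smul_comm, mul_one, map_smul]
  rw [sum_map_congr fun p _ => this p, ← lsumF f, D.counit_right]

private lemma convM_assoc (D : HopfData H) (f g k : H →ₗ[ℂ] H ⊗[ℂ] H) (h : H) :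
    convM D (convM D f g) k h = convM D f (convM D g k) h := by
  set G : (H ⊗[ℂ] H) ⊗[ℂ] H →ₗ[ℂ] H ⊗[ℂ] H :=
    LinearMap.mul' ℂ (H ⊗[ℂ] H) ∘ₗ
      TensorProduct.map (LinearMap.mul' ℂ (H ⊗[ℂ] H) ∘ₗ TensorProduct.map f g) k with hG
  have hGeval : ∀ x y z : H, G ((x ⊗ₜ[ℂ] y) ⊗ₜ[ℂ] z) = (f x * g y) * k z := fun x y z => by
    simp [hG, LinearMap.mul'_apply]
  rw [convM_apply, convM_apply]
  have l1 : ((D.Δ h).map fun p => convM D f g p.1 * k p.2).sum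
      = ((D.Δ h).map fun p =>
          ((D.Δ p.1).map fun q => G ((q.1 ⊗ₜ[ℂ] q.2) ⊗ₜ[ℂ] p.2)).sum).sum := by
    refine sum_map_congr fun p _ => ?_
    rw [convM_apply]
    have e := lsumF (LinearMap.mulRight ℂ (k p.2)) (D.Δ p.1) (fun q => f q.1 * g q.2)
    simp only [LinearMap.mulRight_apply] at e
    rw [e]
    exact sum_map_congr fun q _ => (hGeval q.1 q.2 p.2).symm
  have l2 : ((D.Δ h).map fun p => f p.1 * convM D g k p.2).sum
      = ((D.Δ h).map fun p =>
          ((D.Δ p.2).map fun q => G ((p.1 ⊗ₜ[ℂ] q.1) ⊗ₜ[ℂ] q.2)).sum).sum := by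
    refine sum_map_congr fun p _ => ?_
    rw [convM_apply]
    have e := lsumF (LinearMap.mulLeft ℂ (f p.1)) (D.Δ p.2) (fun q => g q.1 * k q.2)
    simp only [LinearMap.mulLeft_apply] at e
    rw [e]
    exact sum_map_congr fun q _ => by rw [hGeval, mul_assoc]
  rw [l1, l2, TR]

/-- `h ↦ Σ S(h₂) ⊗ S(h₁)`, the candidate for `Δ ∘ S`. -/
private def acW (D : HopfData H) : H →ₗ[ℂ] H ⊗[ℂ] H :=
  TensorProduct.map D.S D.S ∘ₗ (TensorProduct.comm ℂ H H : H ⊗[ℂ] H →ₗ[ℂ] H ⊗[ℂ] H) ∘ₗ D.comul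

private lemma acW_apply (D : HopfData H) (x : H) :
    acW D x = ((D.Δ x).map fun q => D.S q.2 ⊗ₜ[ℂ] D.S q.1).sum := by
  show (TensorProduct.map D.S D.S ∘ₗ
      (TensorProduct.comm ℂ H H : H ⊗[ℂ] H →ₗ[ℂ] H ⊗[ℂ] H)) (D.comul x) = _
  rw [push2 D _ x]
  simp

private lemma convM_CS_Cm (D : HopfData H) (h : H) :
    convM D (D.comul ∘ₗ D.S) D.comul h = eps1 D h := by
  rw [convM_apply]
  have : ∀ p : H × H, (D.comul ∘ₗ D.S) p.1 * D.comul p.2 = D.comul (D.S p.1 * p.2) :=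
    fun p => by rw [D.comul_mul]; rfl
  rw [sum_map_congr fun p _ => this p, ← lsumF D.comul, D.antipode_left,
    Algebra.algebraMap_eq_smul_one, map_smul, D.comul_one, eps1_apply,
    Algebra.TensorProduct.one_def]


private lemma acW_step (D : HopfData H) (u x : H) :
    ((D.Δ x).map fun r => (u ⊗ₜ[ℂ] r.1) * acW D r.2).sum = (u * D.S x) ⊗ₜ[ℂ] 1 := by
  set Gu : (H ⊗[ℂ] H) ⊗[ℂ] H →ₗ[ℂ] H ⊗[ℂ] H :=
    (TensorProduct.comm ℂ H H : H ⊗[ℂ] H →ₗ[ℂ] H ⊗[ℂ] H) ∘ₗ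
      TensorProduct.map (LinearMap.mul' ℂ H ∘ₗ TensorProduct.map LinearMap.id D.S)
        (LinearMap.mulLeft ℂ u ∘ₗ D.S) with hGu
  have hGueval : ∀ a b c : H,
      Gu ((a ⊗ₜ[ℂ] b) ⊗ₜ[ℂ] c) = (u * D.S c) ⊗ₜ[ℂ] (a * D.S b) := fun a b c => by
    simp [hGu, LinearMap.mul'_apply]
  have l1 : ((D.Δ x).map fun r => (u ⊗ₜ[ℂ] r.1) * acW D r.2).sum
      = ((D.Δ x).map fun r =>
          ((D.Δ r.2).map fun q => Gu ((r.1 ⊗ₜ[ℂ] q.1) ⊗ₜ[ℂ] q.2)).sum).sum := by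
    refine sum_map_congr fun r _ => ?_
    rw [acW_apply]
    have e := lsumF (LinearMap.mulLeft ℂ (u ⊗ₜ[ℂ] r.1)) (D.Δ r.2)
      (fun q => D.S q.2 ⊗ₜ[ℂ] D.S q.1)
    simp only [LinearMap.mulLeft_apply] at e
    rw [e]
    refine sum_map_congr fun q _ => ?_
    rw [hGueval, Algebra.TensorProduct.tmul_mul_tmul]
  rw [l1, ← TR D Gu x]
  have l2 : ∀ r : H × H,
      ((D.Δ r.1).map fun q => Gu ((q.1 ⊗ₜ[ℂ] q.2) ⊗ₜ[ℂ] r.2)).sum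
        = D.ε r.1 • ((u * D.S r.2) ⊗ₜ[ℂ] (1 : H)) := by
    intro r
    have e1 : ∀ q : H × H, Gu ((q.1 ⊗ₜ[ℂ] q.2) ⊗ₜ[ℂ] r.2)
        = TensorProduct.mk ℂ H H (u * D.S r.2) (q.1 * D.S q.2) := fun q => hGueval q.1 q.2 r.2
    rw [sum_map_congr fun q _ => e1 q, ← lsumF (TensorProduct.mk ℂ H H (u * D.S r.2)),
      D.antipode_right, Algebra.algebraMap_eq_smul_one]
    simp [TensorProduct.tmul_smul]
  rw [sum_map_congr fun r _ => l2 r]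
  set J : H →ₗ[ℂ] H ⊗[ℂ] H :=
    ((TensorProduct.mk ℂ H H).flip 1) ∘ₗ LinearMap.mulLeft ℂ u ∘ₗ D.S with hJ
  have hJeval : ∀ z, J z = (u * D.S z) ⊗ₜ[ℂ] (1 : H) := fun z => rfl
  have : ∀ r : H × H, D.ε r.1 • ((u * D.S r.2) ⊗ₜ[ℂ] (1 : H)) = J (D.ε r.1 • r.2) := by
    intro r; rw [map_smul, hJeval]
  rw [sum_map_congr fun r _ => this r, ← lsumF J, D.counit_left, hJeval]

private lemma convM_Cm_W (D : HopfData H) (h : H) :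
    convM D D.comul (acW D) h = eps1 D h := by
  rw [convM_apply]
  set G1 : (H ⊗[ℂ] H) ⊗[ℂ] H →ₗ[ℂ] H ⊗[ℂ] H :=
    LinearMap.mul' ℂ (H ⊗[ℂ] H) ∘ₗ
      TensorProduct.map (LinearMap.id : H ⊗[ℂ] H →ₗ[ℂ] H ⊗[ℂ] H) (acW D) with hG1
  have hG1eval : ∀ (a b c : H), G1 ((a ⊗ₜ[ℂ] b) ⊗ₜ[ℂ] c) = (a ⊗ₜ[ℂ] b) * acW D c :=
    fun a b c => by simp [hG1, LinearMap.mul'_apply]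
  have l1 : ((D.Δ h).map fun p => D.comul p.1 * acW D p.2).sum
      = ((D.Δ h).map fun p =>
          ((D.Δ p.1).map fun q => G1 ((q.1 ⊗ₜ[ℂ] q.2) ⊗ₜ[ℂ] p.2)).sum).sum := by
    refine sum_map_congr fun p _ => ?_
    have e := push2 D (LinearMap.mulRight ℂ (acW D p.2)) p.1
    simp only [LinearMap.mulRight_apply] at e
    rw [e]
    exact sum_map_congr fun q _ => (hG1eval q.1 q.2 p.2).symm
  rw [l1, TR]
  have l2 : ∀ p : H × H,
      ((D.Δ p.2).map fun q => G1 ((p.1 ⊗ₜ[ℂ] q.1) ⊗ₜ[ℂ] q.2)).sum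
        = (p.1 * D.S p.2) ⊗ₜ[ℂ] (1 : H) := by
    intro p
    rw [sum_map_congr fun q _ => hG1eval p.1 q.1 q.2]
    exact acW_step D p.1 p.2
  rw [sum_map_congr fun p _ => l2 p]
  have e := lsumF ((TensorProduct.mk ℂ H H).flip 1) (D.Δ h) (fun p => p.1 * D.S p.2)
  simp only [LinearMap.flip_apply, TensorProduct.mk_apply] at e
  rw [← e, D.antipode_right h]
  simp [eps1_apply, Algebra.algebraMap_eq_smul_one, Algebra.TensorProduct.one_def,
    TensorProduct.smul_tmul']

/-- The antipode is an anti-coalgebra map. -/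
private lemma comul_S (D : HopfData H) (a : H) : D.comul (D.S a) = acW D a := by
  have e1 : convM D (D.comul ∘ₗ D.S) D.comul = eps1 D := LinearMap.ext (convM_CS_Cm D)
  have e2 : convM D D.comul (acW D) = eps1 D := LinearMap.ext (convM_Cm_W D)
  calc D.comul (D.S a) = (D.comul ∘ₗ D.S) a := rfl
    _ = convM D (D.comul ∘ₗ D.S) (eps1 D) a := (convM_unit_right D _ a).symm
    _ = convM D (D.comul ∘ₗ D.S) (convM D D.comul (acW D)) a := by rw [e2]
    _ = convM D (convM D (D.comul ∘ₗ D.S) D.comul) (acW D) a := (convM_assoc D _ _ _ a).symm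
    _ = convM D (eps1 D) (acW D) a := by rw [e1]
    _ = acW D a := convM_unit_left D _ a

private lemma S_inj (D : HopfData H) : Function.Injective D.S := fun x y e => by
  have := congrArg D.Sinv e
  rwa [D.Sinv_S, D.Sinv_S] at this

private lemma Sinv_one' (D : HopfData H) : D.Sinv 1 = 1 := by
  rw [← D.S_one, D.Sinv_S, D.S_one]

private lemma Sinv_antimul (D : HopfData H) (a b : H) :
    D.Sinv (a * b) = D.Sinv b * D.Sinv a :=
  S_inj D (by rw [D.S_Sinv, D.S_antimul, D.S_Sinv, D.S_Sinv])

/-- `Σ S⁻¹(h₂) h₁ = ε(h) 1`. -/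
private lemma antipode_left_inv (D : HopfData H) (h : H) :
    ((D.Δ h).map fun p => D.Sinv p.2 * p.1).sum = algebraMap ℂ H (D.ε h) := by
  have key := congrArg D.Sinv (D.antipode_left h)
  rw [lsumF D.Sinv] at key
  have e1 : ∀ p : H × H, p ∈ D.Δ h → D.Sinv p.2 * p.1 = D.Sinv (D.S p.1 * p.2) := by
    intro p _
    rw [Sinv_antimul, D.Sinv_S]
  rw [sum_map_congr e1, key, Algebra.algebraMap_eq_smul_one, map_smul, Sinv_one']

/-- left invariance of `φ` (from right invariance, `φ∘S = φ` and `comul_S`). -/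
private lemma linv (D : HopfData H) (φ : H →ₗ[ℂ] ℂ)
    (hφinv : ∀ h : H, ((D.Δ h).map fun p => φ p.2 • p.1).sum = φ h • (1 : H))
    (hφS : ∀ h : H, φ (D.S h) = φ h) (h : H) :
    ((D.Δ h).map fun p => φ p.1 • p.2).sum = φ h • (1 : H) := by
  set linM : H ⊗[ℂ] H →ₗ[ℂ] H := TensorProduct.lift ((LinearMap.lsmul ℂ H).comp φ)
    with hlinM
  have linM_eval : ∀ x y : H, linM (x ⊗ₜ[ℂ] y) = φ x • y := fun x y => by
    simp [hlinM]
  have key : ∀ a : H, ((D.Δ (D.S a)).map fun p => φ p.1 • p.2).sum = φ a • (1 : H) := by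
    intro a
    have e0 : ((D.Δ (D.S a)).map fun p => φ p.1 • p.2).sum = linM (D.comul (D.S a)) := by
      rw [push2 D linM (D.S a)]
      exact sum_map_congr fun p _ => (linM_eval p.1 p.2).symm
    rw [e0, comul_S, acW_apply, lsumF linM]
    have e1 : ∀ q : H × H, linM (D.S q.2 ⊗ₜ[ℂ] D.S q.1) = D.S (φ q.2 • q.1) := by
      intro q; rw [linM_eval, hφS, map_smul]
    rw [sum_map_congr fun q _ => e1 q, ← lsumF D.S, hφinv, map_smul, D.S_one]
  have := key (D.Sinv h)
  rw [D.S_Sinv] at this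
  rw [this, ← hφS (D.Sinv h), D.S_Sinv]


private lemma list_mul_list {α β A : Type*} [NonUnitalNonAssocSemiring A]
    (l1 : List α) (l2 : List β) (f : α → A) (g : β → A) :
    (l1.map f).sum * (l2.map g).sum
      = (l1.map fun a => (l2.map fun b => f a * g b).sum).sum := by
  induction l1 with
  | nil => simp
  | cons a t ih =>
    rw [List.map_cons, List.sum_cons, List.map_cons, List.sum_cons, add_mul, ih,
      ← List.sum_map_mul_left]

private def linM (φ : H →ₗ[ℂ] ℂ) : H ⊗[ℂ] H →ₗ[ℂ] H :=
  TensorProduct.lift ((LinearMap.lsmul ℂ H).comp φ)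

private lemma linM_eval (φ : H →ₗ[ℂ] ℂ) (x y : H) : linM φ (x ⊗ₜ[ℂ] y) = φ x • y := by
  simp [linM]

private lemma linM_comul (D : HopfData H) (φ : H →ₗ[ℂ] ℂ)
    (hφinv : ∀ h : H, ((D.Δ h).map fun p => φ p.2 • p.1).sum = φ h • (1 : H))
    (hφS : ∀ h : H, φ (D.S h) = φ h) (x : H) :
    linM φ (D.comul x) = φ x • (1 : H) := by
  rw [push2 D (linM φ) x, sum_map_congr fun p _ => linM_eval φ p.1 p.2]
  exact linv D φ hφinv hφS x

private lemma linM_comul_mul (D : HopfData H) (φ : H →ₗ[ℂ] ℂ) (x y : H) :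
    linM φ (D.comul (x * y))
      = ((D.Δ x).map fun r => ((D.Δ y).map fun q =>
          φ (r.1 * q.1) • (r.2 * q.2)).sum).sum := by
  rw [D.comul_mul, ← D.Δ_spec x, ← D.Δ_spec y, list_mul_list, lsumF (linM φ)]
  refine sum_map_congr fun r _ => ?_
  rw [lsumF (linM φ)]
  refine sum_map_congr fun q _ => ?_
  rw [Algebra.TensorProduct.tmul_mul_tmul, linM_eval]

private def srG (D : HopfData H) (φ : H →ₗ[ℂ] ℂ) (r : H × H) :
    (H ⊗[ℂ] H) ⊗[ℂ] H →ₗ[ℂ] H :=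
  TensorProduct.lift
      (((LinearMap.lsmul ℂ H).comp (φ ∘ₗ LinearMap.mulLeft ℂ r.1)).compl₂
        (LinearMap.mulLeft ℂ r.2 ∘ₗ LinearMap.mul' ℂ H ∘ₗ
          TensorProduct.map LinearMap.id D.S))
    ∘ₗ (TensorProduct.assoc ℂ H H H :
        (H ⊗[ℂ] H) ⊗[ℂ] H →ₗ[ℂ] H ⊗[ℂ] (H ⊗[ℂ] H))

private lemma srG_eval (D : HopfData H) (φ : H →ₗ[ℂ] ℂ) (r : H × H) (x y z : H) :
    srG D φ r ((x ⊗ₜ[ℂ] y) ⊗ₜ[ℂ] z) = φ (r.1 * x) • (r.2 * (y * D.S z)) := by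
  simp [srG, LinearMap.mul'_apply]

/-- strong invariance: `Σ φ(b a₁) S(a₂) = Σ φ(b₁ a) b₂`. -/
private lemma strong_inv (D : HopfData H) (φ : H →ₗ[ℂ] ℂ)
    (hφinv : ∀ h : H, ((D.Δ h).map fun p => φ p.2 • p.1).sum = φ h • (1 : H))
    (hφS : ∀ h : H, φ (D.S h) = φ h) (a b : H) :
    ((D.Δ a).map fun p => φ (b * p.1) • D.S p.2).sum
      = ((D.Δ b).map fun p => φ (p.1 * a) • p.2).sum := by
  have expA : ∀ p : H × H, φ (b * p.1) • D.S p.2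
      = ((D.Δ b).map fun r => ((D.Δ p.1).map fun q =>
          srG D φ r ((q.1 ⊗ₜ[ℂ] q.2) ⊗ₜ[ℂ] p.2)).sum).sum := by
    intro p
    have h1 : φ (b * p.1) • D.S p.2 = (linM φ (D.comul (b * p.1))) * D.S p.2 := by
      rw [linM_comul D φ hφinv hφS, smul_mul_assoc, one_mul]
    rw [h1, linM_comul_mul]
    have e := lsumF (LinearMap.mulRight ℂ (D.S p.2)) (D.Δ b)
      (fun r => ((D.Δ p.1).map fun q => φ (r.1 * q.1) • (r.2 * q.2)).sum)
    simp only [LinearMap.mulRight_apply] at e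
    rw [e]
    refine sum_map_congr fun r _ => ?_
    have e2 := lsumF (LinearMap.mulRight ℂ (D.S p.2)) (D.Δ p.1)
      (fun q => φ (r.1 * q.1) • (r.2 * q.2))
    simp only [LinearMap.mulRight_apply] at e2
    rw [e2]
    refine sum_map_congr fun q _ => ?_
    rw [smul_mul_assoc, mul_assoc, srG_eval]
  rw [sum_map_congr fun p _ => expA p, sum_comm' (D.Δ a) (D.Δ b)]
  refine sum_map_congr fun r _ => ?_
  rw [TR D (srG D φ r) a]
  have c1 : ∀ p : H × H, ((D.Δ p.2).map fun q =>
      srG D φ r ((p.1 ⊗ₜ[ℂ] q.1) ⊗ₜ[ℂ] q.2)).sum = (φ (r.1 * p.1) * D.ε p.2) • r.2 := by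
    intro p
    set V : H →ₗ[ℂ] H := φ (r.1 * p.1) • LinearMap.mulLeft ℂ r.2 with hV
    have hVe : ∀ z, V z = φ (r.1 * p.1) • (r.2 * z) := fun z => by simp [hV]
    have e3 : ∀ q : H × H, q ∈ D.Δ p.2 →
        srG D φ r ((p.1 ⊗ₜ[ℂ] q.1) ⊗ₜ[ℂ] q.2) = V (q.1 * D.S q.2) := by
      intro q _; rw [srG_eval, hVe]
    rw [sum_map_congr e3, ← lsumF V, D.antipode_right, hVe,
      Algebra.algebraMap_eq_smul_one, mul_smul_comm, mul_one, smul_smul]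
  rw [sum_map_congr fun p _ => c1 p, sum_map_smul]
  congr 1
  have c2 : ∀ p : H × H, p ∈ D.Δ a →
      φ (r.1 * p.1) * D.ε p.2 = (φ ∘ₗ LinearMap.mulLeft ℂ r.1) (D.ε p.2 • p.1) := by
    intro p _
    simp [map_smul, smul_eq_mul, mul_comm]
  rw [sum_map_congr c2, ← lsumF (φ ∘ₗ LinearMap.mulLeft ℂ r.1), D.counit_right]
  rfl

/-- the key Hopf-algebra identity behind the KMS property. -/
private lemma keyT1 (D : HopfData H) (φ : H →ₗ[ℂ] ℂ)
    (hφinv : ∀ h : H, ((D.Δ h).map fun p => φ p.2 • p.1).sum = φ h • (1 : H))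
    (hφS : ∀ h : H, φ (D.S h) = φ h) (σ : H → H)
    (hKMS : ∀ h g : H, φ (h * g) = φ (g * σ h)) (h g : H) :
    ((D.Δ g).map fun p => φ (h * p.1) • D.Sinv p.2).sum
      = ((D.Δ (σ h)).map fun p => φ (g * p.1) • p.2).sum := by
  have key := congrArg D.Sinv (strong_inv D φ hφinv hφS (σ h) g)
  rw [lsumF D.Sinv, lsumF D.Sinv] at key
  have k1 : ∀ p : H × H, p ∈ D.Δ (σ h) →
      D.Sinv (φ (g * p.1) • D.S p.2) = φ (g * p.1) • p.2 := by
    intro p _; rw [map_smul, D.Sinv_S]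
  have k2 : ∀ p : H × H, p ∈ D.Δ g →
      D.Sinv (φ (p.1 * σ h) • p.2) = φ (h * p.1) • D.Sinv p.2 := by
    intro p _; rw [map_smul, ← hKMS]
  rw [sum_map_congr k1, sum_map_congr k2] at key
  exact key.symm

variable {N : Type*} [Ring N] [Algebra ℂ N]

private def kG (D : HopfData H) (Y : YDData H N D) (m n : N) :
    (H ⊗[ℂ] H) ⊗[ℂ] H →ₗ[ℂ] N :=
  LinearMap.mul' ℂ N ∘ₗ
    TensorProduct.map (Y.act m)
      (Y.act n ∘ₗ TensorProduct.lift (((LinearMap.mul ℂ H).comp D.Sinv).flip)) ∘ₗ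
    (TensorProduct.assoc ℂ H H H :
        (H ⊗[ℂ] H) ⊗[ℂ] H →ₗ[ℂ] H ⊗[ℂ] (H ⊗[ℂ] H))

private lemma kG_eval (D : HopfData H) (Y : YDData H N D) (m n : N) (x y z : H) :
    kG D Y m n ((x ⊗ₜ[ℂ] y) ⊗ₜ[ℂ] z) = Y.act m x * Y.act n (D.Sinv z * y) := by
  simp [kG, LinearMap.mul'_apply]

private lemma K0 (D : HopfData H) (Y : YDData H N D) (m n : N) (h : H) :
    ((D.Δ h).map fun p => Y.act (m * Y.act n (D.Sinv p.2)) p.1).sum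
      = Y.act m h * n := by
  have e1 : ∀ p : H × H, p ∈ D.Δ h →
      Y.act (m * Y.act n (D.Sinv p.2)) p.1
        = ((D.Δ p.1).map fun q => kG D Y m n ((q.1 ⊗ₜ[ℂ] q.2) ⊗ₜ[ℂ] p.2)).sum := by
    intro p _
    rw [Y.act_alg]
    refine sum_map_congr fun q _ => ?_
    rw [kG_eval, ← Y.act_mulH]
  rw [sum_map_congr e1, TR D (kG D Y m n) h]
  have e2 : ∀ p : H × H, p ∈ D.Δ h →
      ((D.Δ p.2).map fun q => kG D Y m n ((p.1 ⊗ₜ[ℂ] q.1) ⊗ₜ[ℂ] q.2)).sum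
        = D.ε p.2 • (Y.act m p.1 * n) := by
    intro p _
    set V : H →ₗ[ℂ] N := LinearMap.mulLeft ℂ (Y.act m p.1) ∘ₗ Y.act n with hV
    have hVe : ∀ z, V z = Y.act m p.1 * Y.act n z := fun z => rfl
    have e3 : ∀ q : H × H, q ∈ D.Δ p.2 →
        kG D Y m n ((p.1 ⊗ₜ[ℂ] q.1) ⊗ₜ[ℂ] q.2) = V (D.Sinv q.2 * q.1) := by
      intro q _; rw [kG_eval, hVe]
    rw [sum_map_congr e3, ← lsumF V, antipode_left_inv, hVe,
      Algebra.algebraMap_eq_smul_one, map_smul, Y.act_one, mul_smul_comm]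
  rw [sum_map_congr e2]
  set U : H →ₗ[ℂ] N := LinearMap.mulRight ℂ n ∘ₗ Y.act m with hU
  have hUe : ∀ z, U z = Y.act m z * n := fun z => rfl
  have e4 : ∀ p : H × H, p ∈ D.Δ h →
      D.ε p.2 • (Y.act m p.1 * n) = U (D.ε p.2 • p.1) := by
    intro p _; rw [map_smul, hUe]
  rw [sum_map_congr e4, ← lsumF U, D.counit_right, hUe]

private lemma Klem (D : HopfData H) (Y : YDData H N D) (μ : N →ₗ[ℂ] ℂ)
    (hμε : ∀ (m : N) (h : H), μ (Y.act m h) = D.ε h * μ m) (m n : N) (h : H) :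
    μ (Y.act m h * n) = μ (m * Y.act n (D.Sinv h)) := by
  rw [← K0 D Y m n h, lsumF μ]
  rw [sum_map_congr fun p _ => hμε (m * Y.act n (D.Sinv p.2)) p.1]
  set C : H →ₗ[ℂ] ℂ := μ ∘ₗ LinearMap.mulLeft ℂ m ∘ₗ Y.act n ∘ₗ D.Sinv with hC
  have hCe : ∀ z, C z = μ (m * Y.act n (D.Sinv z)) := fun z => rfl
  have e : ∀ p : H × H, p ∈ D.Δ h →
      D.ε p.1 * μ (m * Y.act n (D.Sinv p.2)) = C (D.ε p.1 • p.2) := by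
    intro p _; rw [map_smul, hCe, smul_eq_mul]
  rw [sum_map_congr e, ← lsumF C, D.counit_left, hCe]

end Stmt18Aux




/-- if `φ` is an invariant integral on `H` with modular
automorphism `σ` and `μ` is an invariant functional on `N` with the weak KMS
property for `γ`, then `Φ(h # m) = φ(h)μ(m)` satisfies the KMS property on the
smash product with modular automorphism `σ_A(h # m) = σ(h) # γ(m)`. -/
theorem stmt18 {H N : Type*} [Ring H] [Algebra ℂ H] [StarRing H]
    [Ring N] [Algebra ℂ N]
    (D : HopfData H) (Y : YDData H N D)
    (φ : H →ₗ[ℂ] ℂ) (hφ0 : φ ≠ 0)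
    (hφpos : ∀ h : H, 0 ≤ φ (h * star h))
    (hφfaithful : ∀ h : H, (∀ g, φ (h * g) = 0) → (∀ g, φ (g * h) = 0) → h = 0)
    (hφinv : ∀ h : H, ((D.Δ h).map fun p => φ p.2 • p.1).sum = φ h • (1 : H))
    (hφS : ∀ h : H, φ (D.S h) = φ h)
    (σ : H → H)
    (hKMS : ∀ h g : H, φ (h * g) = φ (g * σ h))
    (hφσ : ∀ h : H, φ (σ h) = φ h)
    (hσcounit : ∀ h : H, ((D.Δ (σ h)).map fun p => D.ε p.2 • p.1).sum = σ h)
    (μ : N →ₗ[ℂ] ℂ)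
    (hμε : ∀ (m : N) (h : H), μ (Y.act m h) = D.ε h * μ m)
    (hμKMS : ∀ m n : N, μ (m * n) = μ (n * Y.gamma m))
    (mulA : (H ⊗[ℂ] N) →ₗ[ℂ] (H ⊗[ℂ] N) →ₗ[ℂ] (H ⊗[ℂ] N))
    (hmulA : ∀ (h : H) (m : N) (g : H) (n : N),
      mulA (h ⊗ₜ[ℂ] m) (g ⊗ₜ[ℂ] n)
        = ((D.Δ g).map fun p => (h * p.1) ⊗ₜ[ℂ] (Y.act m p.2 * n)).sum)
    (Φ : (H ⊗[ℂ] N) →ₗ[ℂ] ℂ)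
    (hΦ : ∀ (h : H) (m : N), Φ (h ⊗ₜ[ℂ] m) = φ h * μ m)
    (σA : (H ⊗[ℂ] N) →ₗ[ℂ] (H ⊗[ℂ] N))
    (hσA : ∀ (h : H) (m : N), σA (h ⊗ₜ[ℂ] m) = σ h ⊗ₜ[ℂ] Y.gamma m) :
    ∀ a b : H ⊗[ℂ] N, Φ (mulA a b) = Φ (mulA b (σA a)) := by
  intro a b
  induction a using TensorProduct.induction_on with
  | zero => simp
  | tmul h0 m =>
    induction b using TensorProduct.induction_on with
    | zero => simp
    | tmul g n =>
      rw [hσA, hmulA, hmulA, lsumF Φ, lsumF Φ]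
      set C2 : H →ₗ[ℂ] ℂ := μ ∘ₗ LinearMap.mulLeft ℂ m ∘ₗ Y.act n with hC2
      have hC2e : ∀ z, C2 z = μ (m * Y.act n z) := fun z => rfl
      have key := congrArg C2 (keyT1 D φ hφinv hφS σ hKMS h0 g)
      rw [lsumF C2, lsumF C2] at key
      have tL : ∀ p : H × H, p ∈ D.Δ g →
          Φ ((h0 * p.1) ⊗ₜ[ℂ] (Y.act m p.2 * n)) = C2 (φ (h0 * p.1) • D.Sinv p.2) := by
        intro p _
        rw [hΦ, Klem D Y μ hμε m n p.2, map_smul, hC2e, smul_eq_mul]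
      have tR : ∀ p : H × H, p ∈ D.Δ (σ h0) →
          Φ ((g * p.1) ⊗ₜ[ℂ] (Y.act n p.2 * Y.gamma m)) = C2 (φ (g * p.1) • p.2) := by
        intro p _
        rw [hΦ, ← hμKMS m (Y.act n p.2), map_smul, hC2e, smul_eq_mul]
      rw [sum_map_congr tL, sum_map_congr tR, key]
    | add x y hx hy =>
      simp only [map_add, LinearMap.add_apply, hx, hy]
  | add x y hx hy =>
    simp only [map_add, LinearMap.add_apply, hx, hy]
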